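/- Let (A_j)_{j≥0} be a sequence of invertible linear maps on ℝ^N and (T_j)_{j≥1} linear maps with ‖A_{i} A_{i+1}^{-1}‖ ≤ δ for 0 < δ < 1 and ‖A_i T_{i+1} A_i^{-1} - Id‖ ≤ c_i with ∏_{i≥0}(1 + c_i) ≤ 2. Then for the composition S_{j+1} = T_1 T_2 ⋯ T_{j+1} one has ‖A_0 S_{j+1} A_j^{-1}‖ ≤ 2 δ^j. -/

import Mathlib

/-!
Write `P j = A₀ S_{j+1} A_j⁻¹`. Inserting `A_j⁻¹ A_j` and `A_{j+1}⁻¹ A_{j+1}` gives the recursion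
`P (j+1) = P j · (A_j A_{j+1}⁻¹) · (A_{j+1} T_{j+2} A_{j+1}⁻¹)`, so `P j` is a product of `j` weight
factors of norm `≤ δ` and `j + 1` near-identity factors of norm `≤ 1 + c i`. Submultiplicativity of
the operator norm then bounds `‖P j‖` by `δ ^ j ∏ (1 + c i) ≤ 2 δ ^ j`.
-/

open Finset

theorem norm_le_pow_mul_prod_of_eq_mul_mul {R : Type*} [SeminormedRing R] {P B X : ℕ → R}
    {δ : ℝ} {w : ℕ → ℝ} (hB : ∀ i, ‖B i‖ ≤ δ) (hX : ∀ i, ‖X i‖ ≤ w i) (h0 : P 0 = X 0)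
    (hsucc : ∀ j, P (j + 1) = P j * (B j * X (j + 1))) (j : ℕ) :
    ‖P j‖ ≤ δ ^ j * ∏ i ∈ range (j + 1), w i := by
  have hδ : 0 ≤ δ := (norm_nonneg _).trans (hB 0)
  have hw : ∀ i, 0 ≤ w i := fun i => (norm_nonneg _).trans (hX i)
  induction j with
  | zero => simpa [h0] using hX 0
  | succ j ih =>
    calc ‖P (j + 1)‖ ≤ ‖P j‖ * (‖B j‖ * ‖X (j + 1)‖) := by
          rw [hsucc]; exact (norm_mul_le _ _).trans (by gcongr; exact norm_mul_le _ _)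
      _ ≤ (δ ^ j * ∏ i ∈ range (j + 1), w i) * (δ * w (j + 1)) := by
          have := prod_nonneg fun i (_ : i ∈ range (j + 1)) => hw i
          gcongr
          exacts [hB j, hX _]
      _ = δ ^ (j + 1) * ∏ i ∈ range (j + 2), w i := by
          rw [prod_range_succ _ (j + 1)]; ring

theorem ContinuousLinearEquiv.conj_comp_conj {R M : Type*} [Semiring R] [TopologicalSpace M]
    [AddCommMonoid M] [Module R M] (a m n : M ≃L[R] M) (s t : M →L[R] M) :
    (a : M →L[R] M).comp (s.comp (m.symm : M →L[R] M)) *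
        ((m : M →L[R] M).comp (n.symm : M →L[R] M) *
          (n : M →L[R] M).comp (t.comp (n.symm : M →L[R] M))) =
      (a : M →L[R] M).comp ((s.comp t).comp (n.symm : M →L[R] M)) := by
  ext x
  simp

theorem stmt16_general (E : Type*) [NormedAddCommGroup E] [NormedSpace ℝ E]
    (A : ℕ → E ≃L[ℝ] E) (T : ℕ → E →L[ℝ] E) (c : ℕ → ℝ) (δ : ℝ)
    (hA : ∀ i, ‖((A i : E →L[ℝ] E)).comp ((A (i + 1)).symm : E →L[ℝ] E)‖ ≤ δ)
    (hT : ∀ i, ‖((A i : E →L[ℝ] E)).comp ((T (i + 1)).comp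
        ((A i).symm : E →L[ℝ] E)) - ContinuousLinearMap.id ℝ E‖ ≤ c i)
    (hprod : ∀ J : ℕ, ∏ i ∈ Finset.range J, (1 + c i) ≤ 2) :
    ∀ j : ℕ,
      ‖((A 0 : E →L[ℝ] E)).comp
          (((Nat.rec (motive := fun _ => E →L[ℝ] E) (T 1)
            (fun m S => S.comp (T (m + 2))) j)).comp
            ((A j).symm : E →L[ℝ] E))‖ ≤ 2 * δ ^ j := by
  intro j
  set S : ℕ → E →L[ℝ] E := fun j =>
    Nat.rec (motive := fun _ => E →L[ℝ] E) (T 1) (fun m S => S.comp (T (m + 2))) j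
  have hX : ∀ i, ‖(A i : E →L[ℝ] E).comp ((T (i + 1)).comp ((A i).symm : E →L[ℝ] E))‖ ≤ 1 + c i :=
    fun i => (norm_le_norm_add_norm_sub' _ (ContinuousLinearMap.id ℝ E)).trans
      (add_le_add ContinuousLinearMap.norm_id_le (hT i))
  have hδ : 0 ≤ δ := (norm_nonneg _).trans (hA 0)
  set P : ℕ → E →L[ℝ] E := fun j => (A 0 : E →L[ℝ] E).comp ((S j).comp ((A j).symm : E →L[ℝ] E))
  calc ‖P j‖ ≤ δ ^ j * ∏ i ∈ range (j + 1), (1 + c i) :=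
        norm_le_pow_mul_prod_of_eq_mul_mul (P := P) hA hX rfl
          (fun j => (ContinuousLinearEquiv.conj_comp_conj _ _ _ _ _).symm) j
    _ ≤ 2 * δ ^ j := by
        rw [mul_comm 2]
        gcongr
        exact hprod _

/-- Abstract weighted chain estimate: if ‖A_i A_{i+1}⁻¹‖ ≤ δ and
‖A_i T_{i+1} A_i⁻¹ - Id‖ ≤ c_i with ∏(1+c_i) ≤ 2, then the composition
S_{j+1} = T₁⋯T_{j+1} satisfies ‖A₀ S_{j+1} A_j⁻¹‖ ≤ 2δ^j. -/
theorem stmt16 (E : Type*) [NormedAddCommGroup E] [NormedSpace ℝ E]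
    (A : ℕ → E ≃L[ℝ] E) (T : ℕ → E →L[ℝ] E) (c : ℕ → ℝ) (δ : ℝ)
    (hδ0 : 0 < δ) (hδ1 : δ < 1)
    (hA : ∀ i, ‖((A i : E →L[ℝ] E)).comp ((A (i + 1)).symm : E →L[ℝ] E)‖ ≤ δ)
    (hc : ∀ i, 0 ≤ c i)
    (hT : ∀ i, ‖((A i : E →L[ℝ] E)).comp ((T (i + 1)).comp
        ((A i).symm : E →L[ℝ] E)) - ContinuousLinearMap.id ℝ E‖ ≤ c i)
    (hprod : ∀ J : ℕ, ∏ i ∈ Finset.range J, (1 + c i) ≤ 2) :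
    ∀ j : ℕ,
      ‖((A 0 : E →L[ℝ] E)).comp
          (((Nat.rec (motive := fun _ => E →L[ℝ] E) (T 1)
            (fun m S => S.comp (T (m + 2))) j)).comp
            ((A j).symm : E →L[ℝ] E))‖ ≤ 2 * δ ^ j :=
  stmt16_general E A T c δ hA hT hprod
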